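/- The three matrix elements arising from the transition v_{0,0,0}⊗v_{1,1,0} ↦ terms under ⟨·⟩₂₂ are: ⟨(a⁺)²⟩₂₂ = x(1-p²)/(1-p²x), ⟨a⁺k⟩₂₂ = 0, ⟨k²⟩₂₂ = (1-x)p/(1-p²x). -/

import Mathlib

/-! The ket `χ₂` lives on even levels, and on level `2j` the product of two of its coefficients
is `b_j = (p²;p⁴)_j / (p⁴;p⁴)_j` times a power of the arguments, because
`(p²;p²)_{2j} = (p²;p⁴)_j (p⁴;p⁴)_j`. With `Φ(z) = ∑ b_j z^j`, the pairing with `χ₂(1)` is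
`Φ(x)`, that with `k²χ₂(1)` is `p Φ(p⁴x)` and that with `(a⁺)²χ₂(1)` is `x (Φ(x) - p² Φ(p⁴x))`,
while `a⁺k` changes the parity of the level, so that pairing vanishes. The recursion
`b_{j+1} (1 - p^{4j+4}) = b_j (1 - p^{4j+2})` telescopes into the q-binomial functional equation
`(1 - x) Φ(x) = (1 - p²x) Φ(p⁴x)`, which gives the three values. -/

noncomputable def aPlus (p : ℝ) (v : ℕ → ℂ) : ℕ → ℂ := fun m =>
  match m with
  | 0 => 0
  | Nat.succ m => ((Real.sqrt (1 - p ^ (2 * m + 2)) : ℝ) : ℂ) * v m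

noncomputable def kOp (p : ℝ) (v : ℕ → ℂ) : ℕ → ℂ := fun m =>
  ((p : ℂ) ^ m * ((Real.sqrt p : ℝ) : ℂ)) * v m

noncomputable def qPoch (a q : ℝ) (m : ℕ) : ℝ := ∏ i ∈ Finset.range m, (1 - a * q ^ i)

noncomputable def chi2 (p x : ℝ) : ℕ → ℂ := fun m =>
  if m % 2 = 0 then
    (x : ℂ) ^ (m / 2) * ((Real.sqrt (qPoch (p ^ 2) (p ^ 2) m) : ℝ) : ℂ)
      / ((qPoch (p ^ 4) (p ^ 4) (m / 2) : ℝ) : ℂ)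
  else 0

noncomputable def pairF (f g : ℕ → ℂ) : ℂ := ∑' n : ℕ, f n * g n

theorem one_sub_mul_tsum_eq_of_succ_sub {K : Type*} [Field K] [TopologicalSpace K]
    [IsTopologicalRing K] [T2Space K] {F G : ℕ → K} (hF : Summable F) (hG : Summable G)
    (h0 : F 0 = G 0) {x y : K} (hstep : ∀ j, F (j + 1) - G (j + 1) = x * F j - y * G j) :
    (1 - x) * ∑' j, F j = (1 - y) * ∑' j, G j := by
  have hsum : ∑' j, (F j - G j) = x * ∑' j, F j - y * ∑' j, G j := by
    rw [(hF.sub hG).tsum_eq_zero_add, h0, sub_self, zero_add, funext hstep,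
      (hF.mul_left x).tsum_sub (hG.mul_left y), hF.tsum_mul_left, hG.tsum_mul_left]
  rw [hF.tsum_sub hG] at hsum
  linear_combination hsum

section QPochhammer

theorem qPoch_succ (a q : ℝ) (m : ℕ) : qPoch a q (m + 1) = qPoch a q m * (1 - a * q ^ m) :=
  Finset.prod_range_succ _ _

theorem qPoch_two_mul (a q : ℝ) (j : ℕ) :
    qPoch a q (2 * j) = qPoch a (q ^ 2) j * qPoch (a * q) (q ^ 2) j := by
  induction j with
  | zero => simp [qPoch]
  | succ j ih =>
    rw [show 2 * (j + 1) = 2 * j + 1 + 1 by ring, qPoch_succ, qPoch_succ, ih, qPoch_succ,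
      qPoch_succ]
    ring

theorem qPoch_sq_two_mul (p : ℝ) (j : ℕ) :
    qPoch (p ^ 2) (p ^ 2) (2 * j) = qPoch (p ^ 2) (p ^ 4) j * qPoch (p ^ 4) (p ^ 4) j := by
  rw [qPoch_two_mul, ← pow_mul, ← pow_add]

theorem qPoch_sq_two_mul_add_two (p : ℝ) (j : ℕ) :
    qPoch (p ^ 2) (p ^ 2) (2 * j + 2) = qPoch (p ^ 2) (p ^ 2) (2 * j)
      * (1 - p ^ (2 * (2 * j + 1) + 2)) * (1 - p ^ (2 * (2 * j) + 2)) := by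
  rw [qPoch_succ, qPoch_succ]
  ring

variable {a q : ℝ}

theorem qPoch_pos (ha : 0 ≤ a) (ha1 : a < 1) (hq : 0 ≤ q) (hq1 : q ≤ 1) (m : ℕ) :
    0 < qPoch a q m :=
  Finset.prod_pos fun i _ => by
    nlinarith [mul_le_of_le_one_right ha (pow_le_one₀ hq hq1 (n := i))]

theorem qPoch_nonneg (ha : 0 ≤ a) (ha1 : a ≤ 1) (hq : 0 ≤ q) (hq1 : q ≤ 1) (m : ℕ) :
    0 ≤ qPoch a q m :=
  Finset.prod_nonneg fun i _ => by
    nlinarith [mul_le_of_le_one_right ha (pow_le_one₀ hq hq1 (n := i))]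

theorem qPoch_le_qPoch_of_le {b : ℝ} (hba : b ≤ a) (ha1 : a ≤ 1) (hq : 0 ≤ q)
    (hq1 : q ≤ 1) (m : ℕ) : qPoch a q m ≤ qPoch b q m := by
  refine Finset.prod_le_prod (fun i _ => ?_) (fun i _ => ?_)
  · nlinarith [pow_le_one₀ hq hq1 (n := i), pow_nonneg hq i]
  · nlinarith [pow_nonneg hq i]

noncomputable def qBinomCoeff (a q : ℝ) (j : ℕ) : ℝ := qPoch a q j / qPoch q q j

noncomputable def qBinomSeries (a q z : ℝ) : ℝ := ∑' j, qBinomCoeff a q j * z ^ j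

theorem qBinomCoeff_succ_mul (hq : 0 ≤ q) (hq1 : q < 1) (j : ℕ) :
    qBinomCoeff a q (j + 1) * (1 - q * q ^ j) = qBinomCoeff a q j * (1 - a * q ^ j) := by
  have hfac : 0 < 1 - q * q ^ j := by
    nlinarith [mul_le_of_le_one_right hq (pow_le_one₀ hq hq1.le (n := j))]
  rw [qBinomCoeff, qBinomCoeff, qPoch_succ, qPoch_succ, div_mul_eq_mul_div,
    mul_div_mul_right _ _ hfac.ne', div_mul_eq_mul_div]

theorem abs_qBinomCoeff_le_one (hq : 0 ≤ q) (hq1 : q < 1) (hqa : q ≤ a) (ha1 : a ≤ 1)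
    (j : ℕ) : |qBinomCoeff a q j| ≤ 1 := by
  have hQ := qPoch_pos hq hq1 hq hq1.le j
  rw [abs_le, qBinomCoeff]
  constructor
  · exact (neg_nonpos.2 zero_le_one).trans
      (div_nonneg (qPoch_nonneg (hq.trans hqa) ha1 hq hq1.le j) hQ.le)
  · exact div_le_one_of_le₀ (qPoch_le_qPoch_of_le hqa ha1 hq hq1.le j) hQ.le

theorem summable_qBinomCoeff_mul_pow (hq : 0 ≤ q) (hq1 : q < 1) (hqa : q ≤ a) (ha1 : a ≤ 1)
    {z : ℝ} (hz : |z| < 1) : Summable fun j => qBinomCoeff a q j * z ^ j := by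
  refine Summable.of_norm_bounded (summable_geometric_of_lt_one (abs_nonneg z) hz) fun j => ?_
  rw [Real.norm_eq_abs, abs_mul, abs_pow]
  exact mul_le_of_le_one_left (pow_nonneg (abs_nonneg z) j)
    (abs_qBinomCoeff_le_one hq hq1 hqa ha1 j)

theorem one_sub_mul_qBinomSeries (hq : 0 ≤ q) (hq1 : q < 1) (hqa : q ≤ a) (ha1 : a ≤ 1)
    {z : ℝ} (hz : |z| < 1) :
    (1 - z) * qBinomSeries a q z = (1 - a * z) * qBinomSeries a q (q * z) := by
  have hqz : |q * z| < 1 := by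
    rw [abs_mul, abs_of_nonneg hq]
    nlinarith [abs_nonneg z]
  refine one_sub_mul_tsum_eq_of_succ_sub (summable_qBinomCoeff_mul_pow hq hq1 hqa ha1 hz)
    (summable_qBinomCoeff_mul_pow hq hq1 hqa ha1 hqz) (by simp) fun j => ?_
  linear_combination z ^ (j + 1) * qBinomCoeff_succ_mul (a := a) hq hq1 j

end QPochhammer

theorem chi2_of_odd (p x : ℝ) {n : ℕ} (hn : Odd n) : chi2 p x n = 0 := by
  simp [chi2, Nat.odd_iff.1 hn]

theorem chi2_two_mul (p x : ℝ) (j : ℕ) :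
    chi2 p x (2 * j) =
      ((x ^ j * √(qPoch (p ^ 2) (p ^ 2) (2 * j)) / qPoch (p ^ 4) (p ^ 4) j : ℝ) : ℂ) := by
  simp [chi2]

theorem aPlus_succ (p : ℝ) (v : ℕ → ℂ) (m : ℕ) :
    aPlus p v (m + 1) = ((√(1 - p ^ (2 * m + 2)) : ℝ) : ℂ) * v m := rfl

theorem kOp_apply (p : ℝ) (v : ℕ → ℂ) (m : ℕ) :
    kOp p v m = ((p ^ m * √p : ℝ) : ℂ) * v m := by
  simp [kOp]

theorem pairF_eq_tsum_comp {f g : ℕ → ℂ} {e : ℕ → ℕ} (he : Function.Injective e)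
    (hfg : ∀ n, n ∉ Set.range e → f n * g n = 0) : pairF f g = ∑' j, f (e j) * g (e j) :=
  (he.tsum_eq fun n hn => by_contra fun h => hn (hfg n h)).symm

theorem odd_of_notMem_range_two_mul {n : ℕ} (hn : n ∉ Set.range (2 * ·)) : Odd n :=
  Nat.not_even_iff_odd.1 fun ⟨r, hr⟩ => hn ⟨r, show 2 * r = n by omega⟩

section Pairings

variable {p : ℝ}

theorem kOp_kOp_apply (hp : 0 ≤ p) (v : ℕ → ℂ) (m : ℕ) :
    kOp p (kOp p v) m = ((p * (p ^ 2) ^ m : ℝ) : ℂ) * v m := by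
  rw [kOp_apply, kOp_apply, ← mul_assoc, ← Complex.ofReal_mul]
  congr 2
  linear_combination p ^ m * p ^ m * Real.mul_self_sqrt hp

theorem chi2_mul_chi2_two_mul (hp : 0 ≤ p) (hp1 : p < 1) (x y : ℝ) (j : ℕ) :
    chi2 p x (2 * j) * chi2 p y (2 * j) =
      ((qBinomCoeff (p ^ 2) (p ^ 4) j * (x * y) ^ j : ℝ) : ℂ) := by
  have hp2 : p ^ 2 < 1 := pow_lt_one₀ hp hp1 two_ne_zero
  have hp4 : p ^ 4 < 1 := pow_lt_one₀ hp hp1 four_ne_zero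
  have hA := Real.mul_self_sqrt (qPoch_pos (by positivity) hp2 (by positivity) hp2.le (2 * j)).le
  have hQ := (qPoch_pos (by positivity) hp4 (by positivity) hp4.le j).ne'
  rw [chi2_two_mul, chi2_two_mul, ← Complex.ofReal_mul, qBinomCoeff]
  congr 1
  calc _ = (x * y) ^ j * (√(qPoch (p ^ 2) (p ^ 2) (2 * j)) * √(qPoch (p ^ 2) (p ^ 2) (2 * j)))
        / (qPoch (p ^ 4) (p ^ 4) j * qPoch (p ^ 4) (p ^ 4) j) := by ring
    _ = _ := by rw [hA, qPoch_sq_two_mul]; field_simp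

theorem chi2_two_mul_add_two_mul_sqrt (hp : 0 ≤ p) (hp1 : p < 1) (x : ℝ) (j : ℕ) :
    chi2 p x (2 * j + 2) * ((√(1 - p ^ (2 * (2 * j + 1) + 2)) : ℝ) : ℂ) =
      ((x * √(1 - p ^ (2 * (2 * j) + 2)) : ℝ) : ℂ) * chi2 p x (2 * j) := by
  have hp2 : p ^ 2 < 1 := pow_lt_one₀ hp hp1 two_ne_zero
  have hp4 : p ^ 4 < 1 := pow_lt_one₀ hp hp1 four_ne_zero
  have hA := (qPoch_pos (by positivity) hp2 (by positivity) hp2.le (2 * j)).le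
  have hQ := (qPoch_pos (by positivity) hp4 (by positivity) hp4.le j).ne'
  have hu : 0 < 1 - p ^ (2 * (2 * j + 1) + 2) := sub_pos.2 (pow_lt_one₀ hp hp1 (by omega))
  rw [show 2 * j + 2 = 2 * (j + 1) by ring, chi2_two_mul, chi2_two_mul, ← Complex.ofReal_mul,
    ← Complex.ofReal_mul, show 2 * (j + 1) = 2 * j + 2 by ring, qPoch_sq_two_mul_add_two,
    qPoch_succ (p ^ 4), show p ^ 4 * (p ^ 4) ^ j = p ^ (2 * (2 * j + 1) + 2) by ring,
    Real.sqrt_mul (mul_nonneg hA hu.le), Real.sqrt_mul hA]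
  congr 1
  calc _ = x ^ (j + 1) * √(qPoch (p ^ 2) (p ^ 2) (2 * j)) * √(1 - p ^ (2 * (2 * j) + 2))
        * (√(1 - p ^ (2 * (2 * j + 1) + 2)) * √(1 - p ^ (2 * (2 * j + 1) + 2)))
        / (qPoch (p ^ 4) (p ^ 4) j * (1 - p ^ (2 * (2 * j + 1) + 2))) := by ring
    _ = _ := by rw [Real.mul_self_sqrt hu.le]; field_simp; ring

theorem chi2_mul_kOp_kOp_chi2_two_mul (hp : 0 ≤ p) (hp1 : p < 1) (x y : ℝ) (j : ℕ) :
    chi2 p x (2 * j) * kOp p (kOp p (chi2 p y)) (2 * j) =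
      ((p * (qBinomCoeff (p ^ 2) (p ^ 4) j * (p ^ 4 * (x * y)) ^ j) : ℝ) : ℂ) := by
  rw [kOp_kOp_apply hp, mul_left_comm, chi2_mul_chi2_two_mul hp hp1, ← Complex.ofReal_mul]
  congr 1
  ring

theorem chi2_mul_aPlus_aPlus_chi2_two_mul_add_two (hp : 0 ≤ p) (hp1 : p < 1) (x y : ℝ)
    (j : ℕ) :
    chi2 p x (2 * j + 2) * aPlus p (aPlus p (chi2 p y)) (2 * j + 2) =
      ((x * (qBinomCoeff (p ^ 2) (p ^ 4) j * (x * y) ^ j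
        - p ^ 2 * (qBinomCoeff (p ^ 2) (p ^ 4) j * (p ^ 4 * (x * y)) ^ j)) : ℝ) : ℂ) := by
  have hv : 0 ≤ 1 - p ^ (2 * (2 * j) + 2) := sub_nonneg.2 (pow_le_one₀ hp hp1.le)
  rw [aPlus_succ, aPlus_succ, ← mul_assoc, chi2_two_mul_add_two_mul_sqrt hp hp1, mul_mul_mul_comm,
    chi2_mul_chi2_two_mul hp hp1, ← Complex.ofReal_mul, ← Complex.ofReal_mul]
  congr 1
  rw [mul_assoc x, Real.mul_self_sqrt hv]
  ring

theorem pairF_chi2_chi2 (hp : 0 ≤ p) (hp1 : p < 1) (x y : ℝ) :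
    pairF (chi2 p x) (chi2 p y) = (qBinomSeries (p ^ 2) (p ^ 4) (x * y) : ℂ) := by
  rw [pairF_eq_tsum_comp (mul_right_injective₀ two_ne_zero) fun n hn => by
    rw [chi2_of_odd p x (odd_of_notMem_range_two_mul hn), zero_mul], qBinomSeries,
    Complex.ofReal_tsum]
  exact tsum_congr (chi2_mul_chi2_two_mul hp hp1 x y)

theorem pairF_chi2_kOp_kOp_chi2 (hp : 0 ≤ p) (hp1 : p < 1) (x y : ℝ) :
    pairF (chi2 p x) (kOp p (kOp p (chi2 p y))) =
      ((p * qBinomSeries (p ^ 2) (p ^ 4) (p ^ 4 * (x * y)) : ℝ) : ℂ) := by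
  rw [pairF_eq_tsum_comp (mul_right_injective₀ two_ne_zero) fun n hn => by
    rw [chi2_of_odd p x (odd_of_notMem_range_two_mul hn), zero_mul], qBinomSeries,
    ← tsum_mul_left, Complex.ofReal_tsum]
  exact tsum_congr (chi2_mul_kOp_kOp_chi2_two_mul hp hp1 x y)

theorem pairF_chi2_aPlus_aPlus_chi2 (hp : 0 ≤ p) (hp1 : p < 1) {x y : ℝ} (hxy : |x * y| < 1) :
    pairF (chi2 p x) (aPlus p (aPlus p (chi2 p y))) =
      ((x * (qBinomSeries (p ^ 2) (p ^ 4) (x * y)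
        - p ^ 2 * qBinomSeries (p ^ 2) (p ^ 4) (p ^ 4 * (x * y))) : ℝ) : ℂ) := by
  have hp4 : p ^ 4 < 1 := pow_lt_one₀ hp hp1 four_ne_zero
  have hp42 : p ^ 4 ≤ p ^ 2 := pow_le_pow_of_le_one hp hp1.le (by norm_num)
  have hp2 : p ^ 2 ≤ 1 := pow_le_one₀ hp hp1.le
  have hxy' : |p ^ 4 * (x * y)| < 1 := by
    rw [abs_mul, abs_of_nonneg (by positivity)]; nlinarith [abs_nonneg (x * y)]
  have hsupp : ∀ n, n ∉ Set.range (2 * · + 2) →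
      chi2 p x n * aPlus p (aPlus p (chi2 p y)) n = 0 := by
    rintro (_ | n) hn
    · exact mul_eq_zero_of_right _ rfl
    · refine mul_eq_zero_of_left (chi2_of_odd p x (Nat.not_even_iff_odd.1 ?_)) _
      exact fun ⟨r, hr⟩ => hn ⟨r - 1, show 2 * (r - 1) + 2 = n + 1 by omega⟩
  rw [pairF_eq_tsum_comp (fun a b h => by simpa using h) hsupp, qBinomSeries, qBinomSeries,
    ← tsum_mul_left, ← (summable_qBinomCoeff_mul_pow (by positivity) hp4 hp42 hp2 hxy).tsum_sub
      ((summable_qBinomCoeff_mul_pow (by positivity) hp4 hp42 hp2 hxy').mul_left _),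
    ← tsum_mul_left, Complex.ofReal_tsum]
  exact tsum_congr (chi2_mul_aPlus_aPlus_chi2_two_mul_add_two hp hp1 x y)

theorem pairF_chi2_aPlus_kOp_chi2 (p x y : ℝ) :
    pairF (chi2 p x) (aPlus p (kOp p (chi2 p y))) = 0 := by
  refine (tsum_congr fun n => ?_).trans tsum_zero
  rcases n with _ | m
  · exact mul_eq_zero_of_right _ rfl
  rcases Nat.even_or_odd m with hm | hm
  · exact mul_eq_zero_of_left (chi2_of_odd p x hm.add_one) _
  · rw [aPlus_succ, kOp_apply, chi2_of_odd p y hm, mul_zero, mul_zero, mul_zero]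

end Pairings

/-- The matrix elements for the transition `v_{0,0,0}⊗v_{1,1,0}`:
`⟨(a⁺)²⟩₂₂ = x(1-p²)/(1-p²x)`, `⟨a⁺k⟩₂₂ = 0`, `⟨k²⟩₂₂ = (1-x)p/(1-p²x)`
(the second one stated as the vanishing of the numerator pairing). -/
theorem bracket22_values (p x : ℝ) (hp : 0 < p) (hp1 : p < 1) (hx : 0 < x) (hx1 : x < 1) :
    pairF (chi2 p x) (aPlus p (aPlus p (chi2 p 1))) =
        (((x * (1 - p ^ 2) / (1 - p ^ 2 * x) : ℝ)) : ℂ) * pairF (chi2 p x) (chi2 p 1) ∧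
    pairF (chi2 p x) (aPlus p (kOp p (chi2 p 1))) = 0 ∧
    pairF (chi2 p x) (kOp p (kOp p (chi2 p 1))) =
        ((((1 - x) * p / (1 - p ^ 2 * x) : ℝ)) : ℂ) * pairF (chi2 p x) (chi2 p 1) := by
  have hx' : |x * 1| < 1 := by rw [mul_one, abs_of_pos hx]; exact hx1
  have hrel := one_sub_mul_qBinomSeries (pow_nonneg hp.le 4) (pow_lt_one₀ hp.le hp1 four_ne_zero)
    (pow_le_pow_of_le_one hp.le hp1.le (show 2 ≤ 4 by norm_num)) (pow_le_one₀ hp.le hp1.le) hx'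
  have hden : 1 - p ^ 2 * x ≠ 0 := by nlinarith [pow_lt_one₀ hp.le hp1 (two_ne_zero)]
  rw [pairF_chi2_chi2 hp.le hp1, pairF_chi2_aPlus_aPlus_chi2 hp.le hp1 hx',
    pairF_chi2_kOp_kOp_chi2 hp.le hp1, ← Complex.ofReal_mul, ← Complex.ofReal_mul]
  simp only [mul_one] at hrel ⊢
  refine ⟨congrArg _ ?_, pairF_chi2_aPlus_kOp_chi2 p x 1, congrArg _ ?_⟩
  · rw [div_mul_eq_mul_div, eq_div_iff hden]
    linear_combination (x * p ^ 2) * hrel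
  · rw [div_mul_eq_mul_div, eq_div_iff hden]
    linear_combination (-p) * hrel
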